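/- Consider the counterexample Boolean model f on {0,1}² given by f₁(x) = ¬x₁ ∨ ¬x₂ and f₂(x) = ¬x₁, and its multivalued map h on {0,1,2} × {0,1} given by H₁(x) = +1 iff (x₁ < 2 ∨ ¬x₂) and H₂(x) = +1 iff x₁ < 1 (with h_j(x) = max(0, min(m_j, x_j + H_j(x)))). Then there is an asynchronous transition from (1,1) to (0,1) under f, but there is no asynchronous trajectory from (2,1) to (0,1) under h. -/

import Mathlib

/-- Activity levels of the most permissive scheme: 0, 1, increasing, decreasing. -/
inductive MPLevel : Type
  | zero | one | inc | dec
deriving DecidableEq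

/-- The set γ(x̂) of Boolean states compatible with an m.p. state x̂. -/
def mpGamma {n : ℕ} (x : Fin n → MPLevel) : Set (Fin n → Bool) :=
  {x' | ∀ j, (x j = MPLevel.zero → x' j = false) ∧ (x j = MPLevel.one → x' j = true)}

/-- The set α(x) of Boolean states compatible with a multivalued state x. -/
def mvAlpha {n : ℕ} (m x : Fin n → ℕ) : Set (Fin n → Bool) :=
  {x' | ∀ j, (x j = 0 → x' j = false) ∧ (x j = m j → x' j = true)}

/-- Coordinatewise embedding of Boolean states into m.p. states. -/
def embBM {n : ℕ} (x : Fin n → Bool) : Fin n → MPLevel :=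
  fun j => if x j then MPLevel.one else MPLevel.zero

/-- Embedding of a Boolean state into X = ∏ {0,…,m_j}, sending 1 to m_j. -/
def embX {n : ℕ} (m : Fin n → ℕ) (x : Fin n → Bool) : Fin n → ℕ :=
  fun j => if x j then m j else 0

/-- Transition of the most permissive dynamics of f at coordinate j0. -/
def mpTransAt {n : ℕ} (f : (Fin n → Bool) → Fin n → Bool) (j0 : Fin n)
    (x y : Fin n → MPLevel) : Prop :=
  (∀ j, j ≠ j0 → y j = x j) ∧
    (((x j0 = MPLevel.zero ∨ x j0 = MPLevel.dec) ∧ (∃ x' ∈ mpGamma x, f x' j0 = true) ∧ y j0 = MPLevel.inc) ∨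
     ((x j0 = MPLevel.one ∨ x j0 = MPLevel.inc) ∧ (∃ x' ∈ mpGamma x, f x' j0 = false) ∧ y j0 = MPLevel.dec) ∨
     (x j0 = MPLevel.inc ∧ y j0 = MPLevel.one) ∨
     (x j0 = MPLevel.dec ∧ y j0 = MPLevel.zero))

/-- Transition of the most permissive dynamics of f. -/
def mpTrans {n : ℕ} (f : (Fin n → Bool) → Fin n → Bool) (x y : Fin n → MPLevel) : Prop :=
  ∃ j0, mpTransAt f j0 x y

/-- Transition of the partial J-most-permissive dynamics of f at coordinate j0. -/
def pmpTransAt {n : ℕ} (J : Set (Fin n)) (f : (Fin n → Bool) → Fin n → Bool) (j0 : Fin n)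
    (x y : Fin n → MPLevel) : Prop :=
  (∀ j, j ≠ j0 → y j = x j) ∧
    (((x j0 = MPLevel.zero ∨ x j0 = MPLevel.dec) ∧ (∃ x' ∈ mpGamma x, f x' j0 = true) ∧ y j0 = MPLevel.inc) ∨
     ((x j0 = MPLevel.one ∨ x j0 = MPLevel.inc) ∧ (∃ x' ∈ mpGamma x, f x' j0 = false) ∧ y j0 = MPLevel.dec) ∨
     (x j0 = MPLevel.inc ∧ y j0 = MPLevel.one) ∨
     (x j0 = MPLevel.dec ∧ y j0 = MPLevel.zero) ∨
     (j0 ∉ J ∧ x j0 = MPLevel.zero ∧ (∃ x' ∈ mpGamma x, f x' j0 = true) ∧ y j0 = MPLevel.one) ∨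
     (j0 ∉ J ∧ x j0 = MPLevel.one ∧ (∃ x' ∈ mpGamma x, f x' j0 = false) ∧ y j0 = MPLevel.zero))

/-- Transition of the partial J-most-permissive dynamics of f. -/
def pmpTrans {n : ℕ} (J : Set (Fin n)) (f : (Fin n → Bool) → Fin n → Bool)
    (x y : Fin n → MPLevel) : Prop :=
  ∃ j0, pmpTransAt J f j0 x y

/-- A state of X_{J m.p.}: coordinates outside J are Boolean. -/
def inXJ {n : ℕ} (J : Set (Fin n)) (x : Fin n → MPLevel) : Prop :=
  ∀ j, j ∉ J → (x j = MPLevel.zero ∨ x j = MPLevel.one)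

/-- Asynchronous transition of a Boolean model f. -/
def asyncTransB {n : ℕ} (f : (Fin n → Bool) → Fin n → Bool) (x y : Fin n → Bool) : Prop :=
  ∃ j0, f x j0 ≠ x j0 ∧ y j0 = f x j0 ∧ ∀ j, j ≠ j0 → y j = x j

/-- Asynchronous transition of a multivalued model h (one coordinate moves by 1 toward its target). -/
def asyncTrans {n : ℕ} (h : (Fin n → ℕ) → Fin n → ℕ) (x y : Fin n → ℕ) : Prop :=
  ∃ j0, h x j0 ≠ x j0 ∧ (∀ j, j ≠ j0 → y j = x j) ∧
    ((x j0 < h x j0 ∧ y j0 = x j0 + 1) ∨ (h x j0 < x j0 ∧ y j0 = x j0 - 1))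

/-- An m.p. state x̂ is compatible with a multivalued state x. -/
def mpCompat {n : ℕ} (m x : Fin n → ℕ) (xh : Fin n → MPLevel) : Prop :=
  ∀ j, (x j = 0 → xh j = MPLevel.zero) ∧ (x j = m j → xh j = MPLevel.one) ∧
    (0 < x j → x j < m j → (xh j = MPLevel.inc ∨ xh j = MPLevel.dec))

/-- h is a multivalued model on X = ∏ {0,…,m_j}: maps X to X, moving each coordinate by at most 1. -/
def isMVModel {n : ℕ} (m : Fin n → ℕ) (h : (Fin n → ℕ) → Fin n → ℕ) : Prop :=
  ∀ x, (∀ j, x j ≤ m j) → ∀ j, h x j ≤ m j ∧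
    (h x j = x j ∨ h x j = x j + 1 ∨ h x j + 1 = x j)

/-- h is a multivalued refinement of the Boolean model f. -/
def isRefinement {n : ℕ} (m : Fin n → ℕ) (f : (Fin n → Bool) → Fin n → Bool)
    (h : (Fin n → ℕ) → Fin n → ℕ) : Prop :=
  ∀ x, (∀ j, x j ≤ m j) → ∀ j,
    (h x j < x j → ∃ x' ∈ mvAlpha m x, f x' j = false ∧ x' j = true) ∧
    (x j < h x j → ∃ x' ∈ mvAlpha m x, f x' j = true ∧ x' j = false)

/-- A literal in a DNF: a regulator index, a polarity, and a threshold (used in the multivalued reading). -/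
structure Lit (n : ℕ) where
  idx : Fin n
  pos : Bool
  thr : ℕ

/-- Boolean evaluation of a literal (threshold ignored). -/
def evalLitB {n : ℕ} (x : Fin n → Bool) (l : Lit n) : Bool :=
  if l.pos then x l.idx else !(x l.idx)

/-- Multivalued evaluation of a literal: x_idx ≥ thr+1 for a positive literal, x_idx < thr+1 otherwise. -/
def evalLitM {n : ℕ} (x : Fin n → ℕ) (l : Lit n) : Bool :=
  if l.pos then decide (l.thr + 1 ≤ x l.idx) else decide (x l.idx < l.thr + 1)

/-- Boolean evaluation of a DNF (list of conjunctive clauses). -/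
def evalDNFB {n : ℕ} (x : Fin n → Bool) (φ : List (List (Lit n))) : Bool :=
  φ.any fun c => c.all (evalLitB x)

/-- Multivalued evaluation of a DNF via the thresholds. -/
def evalDNFM {n : ℕ} (x : Fin n → ℕ) (φ : List (List (Lit n))) : Bool :=
  φ.any fun c => c.all (evalLitM x)

/-- Refinement built from the DNF threshold parameterisation:
h_j(x) = max(0, min(m_j, x_j + H_j(x))) with H_j(x) = +1 iff the multivalued DNF of f_j is true. -/
def hDNF {n : ℕ} (m : Fin n → ℕ) (φ : Fin n → List (List (Lit n)))
    (x : Fin n → ℕ) : Fin n → ℕ :=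
  fun j => if evalDNFM x (φ j) then min (m j) (x j + 1) else x j - 1

/-- The counterexample Boolean model: f₁(x) = ¬x₁ ∨ ¬x₂, f₂(x) = ¬x₁. -/
def fCex (x : Fin 2 → Bool) : Fin 2 → Bool := ![!x 0 || !x 1, !x 0]

/-- H for the counterexample refinement: H₁ = +1 iff (x₁ < 2 ∨ x₂ = 0), H₂ = +1 iff x₁ < 1. -/
def HCex (x : Fin 2 → ℕ) : Fin 2 → Bool := ![decide (x 0 < 2 ∨ x 1 = 0), decide (x 0 < 1)]

/-- The counterexample refinement h on {0,1,2} × {0,1}. -/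
def hCex (x : Fin 2 → ℕ) : Fin 2 → ℕ :=
  fun j => if HCex x j then min (![2, 1] j) (x j + 1) else x j - 1

/-! The first coordinate of h can only decrease where H₁ = −1, i.e. at x₁ = 2, and then only
to 1. Hence the lower bound x₁ ≥ 1 is preserved by every asynchronous step of h, and (0,1) is
unreachable from (2,1), although f lets (1,1) step to (0,1). -/

theorem le_of_asyncTrans {n : ℕ} {h : (Fin n → ℕ) → Fin n → ℕ} {j : Fin n} {c : ℕ}
    (hh : ∀ x, c ≤ x j → c ≤ h x j) {x y : Fin n → ℕ} (hxy : asyncTrans h x y)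
    (hx : c ≤ x j) : c ≤ y j := by
  obtain ⟨j0, -, hfix, hmove⟩ := hxy
  obtain rfl | hj := eq_or_ne j j0
  · have := hh x hx
    omega
  · rw [hfix j hj]
    exact hx

theorem le_of_reflTransGen_asyncTrans {n : ℕ} {h : (Fin n → ℕ) → Fin n → ℕ} {j : Fin n}
    {c : ℕ} (hh : ∀ x, c ≤ x j → c ≤ h x j) {x y : Fin n → ℕ}
    (hxy : Relation.ReflTransGen (asyncTrans h) x y) (hx : c ≤ x j) : c ≤ y j := by
  induction hxy with
  | refl => exact hx
  | tail _ hstep ih => exact le_of_asyncTrans hh hstep ih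

theorem one_le_hCex_zero (x : Fin 2 → ℕ) (hx : 1 ≤ x 0) : 1 ≤ hCex x 0 := by
  simp only [hCex, HCex, Matrix.cons_val_zero, decide_eq_true_eq]
  split_ifs <;> omega

theorem asyncTransB_fCex : asyncTransB fCex ![true, true] ![false, true] := by
  unfold asyncTransB fCex
  decide

/-- there is an asynchronous transition (1,1) → (0,1) under f, but no
asynchronous trajectory from (2,1) to (0,1) under h. -/
theorem cex_self_inhibition :
    asyncTransB fCex ![true, true] ![false, true] ∧
    ¬ Relation.ReflTransGen (asyncTrans hCex) ![2, 1] ![0, 1] := by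
  refine ⟨asyncTransB_fCex, fun hpath => ?_⟩
  have := le_of_reflTransGen_asyncTrans (j := 0) one_le_hCex_zero hpath (by simp)
  simp at this
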